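/- Let e and f be idempotents of S. Then: (1) if λ ∈ J_e^* and μ ∈ J_f^* lie in the same G̃-orbit in J^*, then there exists ν ∈ J_{ef}^* lying in the same G̃-orbit; (2) two elements λ, μ ∈ J_e^* lie in the same G̃-orbit in J^* if and only if they lie in the same G̃_e-orbit. -/

import Mathlib

/-- `λ ∈ J_e^*`: the linear form `λ` on `J` satisfies `λ x = λ (e*x*e)` for all `x ∈ J`. -/
def MemJeStar {F A : Type*} [Field F] [Ring A] [Algebra F A]
    (J : Ideal A) (hJr : ∀ x ∈ J, ∀ a : A, x * a ∈ J) (e : A)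
    (lam : (Submodule.restrictScalars F J) →ₗ[F] F) : Prop :=
  ∀ x (hx : x ∈ J), lam ⟨x, hx⟩ = lam ⟨e * x * e, hJr _ (J.mul_mem_left e hx) e⟩

/-- `λ, μ ∈ J^*` lie in the same `G̃`-orbit: `μ x = λ (t * a * x * b * t⁻¹)` for all
`x ∈ J`, where `t ∈ H = S^×` (both `t` and `t⁻¹` lie in `S`) and `a, b ∈ N = 1 + J`. -/
def SameOrbitJStar {F A : Type*} [Field F] [Ring A] [Algebra F A]
    (J : Ideal A) (hJr : ∀ x ∈ J, ∀ a : A, x * a ∈ J) (S : Subalgebra F A)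
    (lam mu : (Submodule.restrictScalars F J) →ₗ[F] F) : Prop :=
  ∃ t : Aˣ, (t : A) ∈ S ∧ ((t⁻¹ : Aˣ) : A) ∈ S ∧
    ∃ a b : A, a - 1 ∈ J ∧ b - 1 ∈ J ∧
      ∀ x (hx : x ∈ J), mu ⟨x, hx⟩ =
        lam ⟨(t : A) * a * x * b * ((t⁻¹ : Aˣ) : A),
          hJr _ (hJr _ (J.mul_mem_left ((t : A) * a) hx) b) ((t⁻¹ : Aˣ) : A)⟩

/-- `λ, μ ∈ J_e^*` lie in the same `G̃_e`-orbit: `μ x = λ (t * a * x * b * s)` for all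
`x ∈ J`, where `t ∈ (eSe)ˣ` with inverse `s` (taken in `eAe`, so `t*s = s*t = e`) and
`a, b ∈ e + eJe`. -/
def SameOrbitJeStar {F A : Type*} [Field F] [Ring A] [Algebra F A]
    (J : Ideal A) (hJr : ∀ x ∈ J, ∀ a : A, x * a ∈ J) (S : Subalgebra F A) (e : A)
    (lam mu : (Submodule.restrictScalars F J) →ₗ[F] F) : Prop :=
  ∃ t s : A, t ∈ S ∧ s ∈ S ∧ e * t = t ∧ t * e = t ∧ e * s = s ∧ s * e = s ∧
    t * s = e ∧ s * t = e ∧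
    ∃ a b : A, a - e ∈ J ∧ e * a = a ∧ a * e = a ∧ b - e ∈ J ∧ e * b = b ∧ b * e = b ∧
      ∀ x (hx : x ∈ J), mu ⟨x, hx⟩ =
        lam ⟨t * a * x * b * s, hJr _ (hJr _ (J.mul_mem_left (t * a) hx) b) s⟩

/-!
As `S ∩ J = 0` and every commutator lies in `J`, the complement `S` is commutative, so an
idempotent `e ∈ S` commutes with the `H`-component `t` of every `(t, a, b) ∈ G̃`. A functional
in `J_e^*` only sees corners `e y e`, and on corner arguments `(t, a, b)` acts like
`(t, e a e + 1 - e, e b e + 1 - e)`. So if `μ = (t, a, b) · λ` then `ν = μ (e · e)`, which lies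
in `J_{ef}^*`, is again in the orbit of `λ`, hence of `μ`: the orbit relation is symmetric
because `1 + J` consists of units. For (2), `(t, a, b) ↦ (e t, e a e, e b e)` and
`(t, a, b) ↦ (t + 1 - e, a + 1 - e, b + 1 - e)` pass between `G̃` and `G̃_e`.
-/

theorem Subalgebra.commute_of_disjoint_of_commutator_mem {F A : Type*} [Field F] [Ring A]
    [Algebra F A] {S : Subalgebra F A} {V : Submodule F A}
    (hSV : Disjoint (Subalgebra.toSubmodule S) V) (hV : ∀ x ∈ S, ∀ y ∈ S, x * y - y * x ∈ V)
    {x y : A} (hx : x ∈ S) (hy : y ∈ S) : Commute x y :=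
  sub_eq_zero.mp <| Submodule.disjoint_def.mp hSV _
    (S.sub_mem (S.mul_mem hx hy) (S.mul_mem hy hx)) (hV x hx y hy)

namespace Ideal

variable {R : Type*} [Ring R] {J : Ideal R}

theorem exists_mul_eq_one_of_sub_one_mem (hJ : J ≤ (⊥ : Ideal R).jacobson) {r : R}
    (hr : r - 1 ∈ J) : ∃ s, s - 1 ∈ J ∧ s * r = 1 := by
  obtain ⟨s, hs⟩ := exists_mul_sub_mem_of_sub_one_mem_jacobson r (hJ hr)
  have hsr : s * r = 1 := sub_eq_zero.mp hs
  refine ⟨s, ?_, hsr⟩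
  rw [← neg_sub, ← hsr, ← mul_sub_one]
  exact J.neg_mem (J.mul_mem_left s hr)

theorem exists_inv_of_sub_one_mem (hJ : J ≤ (⊥ : Ideal R).jacobson) {r : R}
    (hr : r - 1 ∈ J) : ∃ s, s - 1 ∈ J ∧ s * r = 1 ∧ r * s = 1 := by
  obtain ⟨s, hs, hsr⟩ := exists_mul_eq_one_of_sub_one_mem hJ hr
  obtain ⟨w, -, hws⟩ := exists_mul_eq_one_of_sub_one_mem hJ hs
  have hwr : w = r := by rw [← mul_one w, ← hsr, ← mul_assoc, hws, one_mul]
  exact ⟨s, hs, hsr, hwr ▸ hws⟩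

end Ideal

theorem Commute.sandwich_mul_mul {R : Type*} [Semigroup R] {e t s : R} (ht : Commute e t)
    (hs : Commute e s) (a x b : R) :
    e * (t * a * x * b * s) * e = t * (e * a * x * b * e) * s := by
  simp only [mul_assoc, ht.left_comm, hs.eq]

namespace IsIdempotentElem

variable {R : Type*} [Ring R] {e p q : R}

theorem mul_add_one_sub (he : IsIdempotentElem e) (hp : e * p = p) : e * (p + (1 - e)) = p := by
  rw [mul_add, hp, he.mul_one_sub_self, add_zero]

theorem add_one_sub_mul (he : IsIdempotentElem e) (hp : p * e = p) : (p + (1 - e)) * e = p := by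
  rw [add_mul, hp, he.one_sub_mul_self, add_zero]

theorem add_one_sub_mul_add_one_sub (he : IsIdempotentElem e) (hp : p * e = p) (hq : e * q = q) :
    (p + (1 - e)) * (q + (1 - e)) = p * q + (1 - e) := by
  have hpe : p * (1 - e) = 0 := by rw [mul_one_sub, hp, sub_self]
  have heq : (1 - e) * q = 0 := by rw [one_sub_mul, hq, sub_self]
  rw [add_mul, mul_add, mul_add, hpe, heq, he.one_sub.eq, add_zero, zero_add]

theorem corner_sub_one_mem (he : IsIdempotentElem e) {J : Ideal R}
    (hJr : ∀ x ∈ J, ∀ a : R, x * a ∈ J) {a : R} (ha : a - 1 ∈ J) :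
    e * a * e - e ∈ J := by
  have : e * a * e - e = e * (a - 1) * e := by rw [mul_sub_one, sub_mul, he.eq]
  rw [this]
  exact hJr _ (J.mul_mem_left e ha) e

end IsIdempotentElem

section DualOrbits

variable {F A : Type*} [Field F] [Ring A] [Algebra F A] {J : Ideal A}
  {hJr : ∀ x ∈ J, ∀ a : A, x * a ∈ J} {S : Subalgebra F A} {e f : A}
  {lam mu nu : Submodule.restrictScalars F J →ₗ[F] F}

variable (hJr) in
def cornerMap (e : A) : Submodule.restrictScalars F J →ₗ[F] Submodule.restrictScalars F J :=
  (LinearMap.mulRight F e ∘ₗ LinearMap.mulLeft F e).restrict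
    fun _ hx => hJr _ (J.mul_mem_left e hx) e

theorem MemJeStar.apply_eq_of_corner_eq (hlam : MemJeStar J hJr e lam) {x y : A}
    (hx : x ∈ J) (hy : y ∈ J) (h : e * x * e = e * y * e) : lam ⟨x, hx⟩ = lam ⟨y, hy⟩ :=
  (hlam x hx).trans <| (congrArg lam (Subtype.ext h)).trans (hlam y hy).symm

theorem MemJeStar.comp_cornerMap (he : IsIdempotentElem e) (hf : IsIdempotentElem f)
    (hef : Commute e f) (hmu : MemJeStar J hJr f mu) :
    MemJeStar J hJr (e * f) (mu.comp (cornerMap hJr e)) := fun x hx =>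
  hmu.apply_eq_of_corner_eq _ _ <|
    show f * (e * x * e) * f = f * (e * (e * f * x * (e * f)) * e) * f by
      simp only [mul_assoc, he.eq, he.mul_self_mul, hf.mul_self_mul, hef.eq, hef.left_comm]

theorem SameOrbitJStar.trans (hlm : SameOrbitJStar J hJr S lam mu)
    (hmn : SameOrbitJStar J hJr S mu nu) : SameOrbitJStar J hJr S lam nu := by
  obtain ⟨t, ht, ht', a, b, ha, hb, hlm⟩ := hlm
  obtain ⟨s, hs, hs', c, d, hc, hd, hmn⟩ := hmn
  refine ⟨t * s, S.mul_mem ht hs, by simpa using S.mul_mem hs' ht',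
    ↑s⁻¹ * a * s * c, d * ↑s⁻¹ * b * s, ?_, ?_, fun x hx => ?_⟩
  · have : ↑s⁻¹ * a * s * c - 1 = ↑s⁻¹ * (a - 1) * s * c + (c - 1) := by
      simp only [mul_sub, sub_mul, mul_one, one_mul, Units.inv_mul]; abel
    rw [this]
    exact J.add_mem (hJr _ (hJr _ (J.mul_mem_left _ ha) _) _) hc
  · have : d * ↑s⁻¹ * b * s - 1 = d * ↑s⁻¹ * (b - 1) * s + (d - 1) := by
      simp only [mul_sub, sub_mul, mul_one, mul_assoc, Units.inv_mul]; abel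
    rw [this]
    exact J.add_mem (hJr _ (J.mul_mem_left _ hb) _) hd
  · rw [hmn, hlm]
    congr 2
    simp only [Units.val_mul, mul_inv_rev, mul_assoc, Units.mul_inv_cancel_left]

theorem SameOrbitJStar.symm (hJ : J ≤ (⊥ : Ideal A).jacobson)
    (hlm : SameOrbitJStar J hJr S lam mu) : SameOrbitJStar J hJr S mu lam := by
  obtain ⟨t, ht, ht', a, b, ha, hb, hlm⟩ := hlm
  obtain ⟨a', ha', -, haa'⟩ := Ideal.exists_inv_of_sub_one_mem hJ ha
  obtain ⟨b', hb', hb'b, -⟩ := Ideal.exists_inv_of_sub_one_mem hJ hb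
  have conj_mem : ∀ c : A, c - 1 ∈ J → (t : A) * c * ↑t⁻¹ - 1 ∈ J := fun c hc => by
    rw [← Units.mul_inv t, ← sub_mul, ← mul_sub_one]
    exact hJr _ (J.mul_mem_left _ hc) _
  refine ⟨t⁻¹, ht', by simpa using ht, t * a' * ↑t⁻¹, t * b' * ↑t⁻¹, conj_mem a' ha',
    conj_mem b' hb', fun x hx => ?_⟩
  rw [hlm]
  congr 2
  simp only [inv_inv, mul_assoc, Units.inv_mul_cancel_left]
  rw [← mul_assoc a, haa', one_mul, ← mul_assoc b', hb'b, one_mul, Units.mul_inv_cancel_left,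
    Units.mul_inv, mul_one]

theorem SameOrbitJStar.comp_cornerMap (he : IsIdempotentElem e) (hSe : ∀ s ∈ S, Commute e s)
    (hlam : MemJeStar J hJr e lam) (hlm : SameOrbitJStar J hJr S lam mu) :
    SameOrbitJStar J hJr S lam (mu.comp (cornerMap hJr e)) := by
  obtain ⟨t, ht, ht', a, b, ha, hb, hlm⟩ := hlm
  have hcorner (c : A) : e * c * e + (1 - e) - 1 = e * c * e - e := by abel
  refine ⟨t, ht, ht', e * a * e + (1 - e), e * b * e + (1 - e),
    hcorner a ▸ he.corner_sub_one_mem hJr ha, hcorner b ▸ he.corner_sub_one_mem hJr hb,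
    fun x hx => (hlm _ _).trans (hlam.apply_eq_of_corner_eq _ _ ?_)⟩
  have sandwich := (hSe _ ht).sandwich_mul_mul (hSe _ ht')
  rw [sandwich, sandwich]
  congr 2
  calc e * a * (e * x * e) * b * e = e * a * e * x * (e * b * e) := by simp only [mul_assoc]
    _ = e * (e * a * e + (1 - e)) * x * ((e * b * e + (1 - e)) * e) := by
        rw [he.mul_add_one_sub (by simp only [mul_assoc, he.mul_self_mul]),
          he.add_one_sub_mul (he.mul_mul_self _)]
    _ = e * (e * a * e + (1 - e)) * x * (e * b * e + (1 - e)) * e := (mul_assoc _ _ _).symm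

theorem SameOrbitJStar.sameOrbitJeStar (he : IsIdempotentElem e) (heS : e ∈ S)
    (hSe : ∀ s ∈ S, Commute e s) (hlam : MemJeStar J hJr e lam) (hmu : MemJeStar J hJr e mu)
    (hlm : SameOrbitJStar J hJr S lam mu) : SameOrbitJeStar J hJr S e lam mu := by
  obtain ⟨t, ht, ht', a, b, ha, hb, hlm⟩ := hlm
  have hct := hSe _ ht
  have hct' := hSe _ ht'
  refine ⟨e * t, e * ↑t⁻¹, S.mul_mem heS ht, S.mul_mem heS ht', he.mul_self_mul _, ?_,
    he.mul_self_mul _, ?_, ?_, ?_, e * a * e, e * b * e, he.corner_sub_one_mem hJr ha, ?_,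
    he.mul_mul_self _, he.corner_sub_one_mem hJr hb, ?_, he.mul_mul_self _, fun x hx => ?_⟩
  · rw [mul_assoc, ← hct.eq, he.mul_self_mul]
  · rw [mul_assoc, ← hct'.eq, he.mul_self_mul]
  · rw [mul_assoc, ← hct.left_comm, he.mul_self_mul, Units.mul_inv, mul_one]
  · rw [mul_assoc, ← hct'.left_comm, he.mul_self_mul, Units.inv_mul, mul_one]
  · simp only [mul_assoc, he.mul_self_mul]
  · simp only [mul_assoc, he.mul_self_mul]
  · refine (hmu x hx).trans <| (hlm _ _).trans <| hlam.apply_eq_of_corner_eq _ _ ?_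
    simp only [mul_assoc, he.eq, he.mul_self_mul, hct.eq, hct.left_comm, hct'.eq, hct'.left_comm]

theorem SameOrbitJeStar.sameOrbitJStar (he : IsIdempotentElem e) (heS : e ∈ S)
    (hlam : MemJeStar J hJr e lam) (hlm : SameOrbitJeStar J hJr S e lam mu) :
    SameOrbitJStar J hJr S lam mu := by
  obtain ⟨t, s, ht, hs, het, hte, hes, hse, hts, hst, a, b, ha, hea, hae, hb, heb, hbe, hlm⟩ :=
    hlm
  have hunit {p q : A} (hp : p * e = p) (hq : e * q = q) (hpq : p * q = e) :
      (p + (1 - e)) * (q + (1 - e)) = 1 := by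
    rw [he.add_one_sub_mul_add_one_sub hp hq, hpq, add_sub_cancel]
  have hsub (p : A) : p + (1 - e) - 1 = p - e := by abel
  have hS' : 1 - e ∈ S := S.sub_mem S.one_mem heS
  refine ⟨⟨t + (1 - e), s + (1 - e), hunit hte hes hts, hunit hse het hst⟩, S.add_mem ht hS',
    S.add_mem hs hS', a + (1 - e), b + (1 - e), hsub a ▸ ha, hsub b ▸ hb,
    fun x hx => (hlm x hx).trans (hlam.apply_eq_of_corner_eq _ _ ?_)⟩
  show e * (t * a * x * b * s) * e
    = e * ((t + (1 - e)) * (a + (1 - e)) * x * (b + (1 - e)) * (s + (1 - e))) * e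
  rw [mul_assoc _ (b + _), he.add_one_sub_mul_add_one_sub hte hea,
    he.add_one_sub_mul_add_one_sub hbe hes]
  calc e * (t * a * x * b * s) * e = t * a * x * (b * s) := by
        simp only [← mul_assoc, het]; simp only [mul_assoc, hse]
    _ = e * (t * a + (1 - e)) * x * ((b * s + (1 - e)) * e) := by
        rw [he.mul_add_one_sub (by rw [← mul_assoc, het]),
          he.add_one_sub_mul (by rw [mul_assoc, hse])]
    _ = e * ((t * a + (1 - e)) * x * (b * s + (1 - e))) * e := by simp only [mul_assoc]

end DualOrbits

theorem dual_orbit_corner_lemma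
    {F A : Type*} [Field F] [Ring A] [Algebra F A]
    (J : Ideal A) (hJ : J = (⊥ : Ideal A).jacobson)
    (hJr : ∀ x ∈ J, ∀ a : A, x * a ∈ J)
    (hred : ∀ a b : A, a * b - b * a ∈ J)
    (S : Subalgebra F A)
    (hS : IsCompl (Subalgebra.toSubmodule S) (Submodule.restrictScalars F J))
    (e f : A) (he : IsIdempotentElem e) (heS : e ∈ S)
    (hf : IsIdempotentElem f) (hfS : f ∈ S) :
    (∀ lam mu : (Submodule.restrictScalars F J) →ₗ[F] F,
      MemJeStar J hJr e lam → MemJeStar J hJr f mu →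
      SameOrbitJStar J hJr S lam mu →
      ∃ nu : (Submodule.restrictScalars F J) →ₗ[F] F,
        MemJeStar J hJr (e * f) nu ∧
        SameOrbitJStar J hJr S lam nu ∧ SameOrbitJStar J hJr S mu nu) ∧
    (∀ lam mu : (Submodule.restrictScalars F J) →ₗ[F] F,
      MemJeStar J hJr e lam → MemJeStar J hJr e mu →
      (SameOrbitJStar J hJr S lam mu ↔ SameOrbitJeStar J hJr S e lam mu)) := by
  have hSe : ∀ s ∈ S, Commute e s := fun s hs =>
    Subalgebra.commute_of_disjoint_of_commutator_mem hS.disjoint (fun x _ y _ => hred x y) heS hs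
  refine ⟨fun lam mu hlam hmu hlm => ?_, fun lam mu hlam hmu => ?_⟩
  · have hlnu := hlm.comp_cornerMap he hSe hlam
    exact ⟨_, hmu.comp_cornerMap he hf (hSe f hfS), hlnu, (hlm.symm hJ.le).trans hlnu⟩
  · exact ⟨fun h => h.sameOrbitJeStar he heS hSe hlam hmu,
      fun h => h.sameOrbitJStar he heS hlam⟩
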